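/- arXiv:1502.01288 — 5 statements merged into one kernel-verified Lean document; each statement's English description precedes it below -/
import Mathlib

section
/- Let ℓ be an odd prime and let g ∈ GL₂(F_ℓ) have trace 0. Then g lies in a conjugate of N_ns, the normalizer of the nonsplit Cartan subgroup. -/
open Matrix

abbrev GL2 (ℓ : ℕ) : Type := GL (Fin 2) (ZMod ℓ)

/-- The underlying matrix of an element of `GL₂(F_ℓ)`. -/
def mat {ℓ : ℕ} (g : GL2 ℓ) : Matrix (Fin 2) (Fin 2) (ZMod ℓ) := g

/-- `g` is a diagonal matrix. -/
def IsDiag {ℓ : ℕ} (g : GL2 ℓ) : Prop := mat g 0 1 = 0 ∧ mat g 1 0 = 0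

/-- `g` is an antidiagonal matrix. -/
def IsAnti {ℓ : ℕ} (g : GL2 ℓ) : Prop := mat g 0 0 = 0 ∧ mat g 1 1 = 0

/-- `g` is a scalar matrix. -/
def IsScalar {ℓ : ℕ} (g : GL2 ℓ) : Prop :=
  ∃ c : ZMod ℓ, mat g = c • (1 : Matrix (Fin 2) (Fin 2) (ZMod ℓ))

/-- Membership in the split Cartan subgroup `C_sp` (the diagonal matrices). -/
def InCsp {ℓ : ℕ} (g : GL2 ℓ) : Prop := IsDiag g

/-- Membership in the normalizer `N_sp` of the split Cartan (diagonal or antidiagonal). -/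
def InNsp {ℓ : ℕ} (g : GL2 ℓ) : Prop := IsDiag g ∨ IsAnti g

/-- Membership in the nonsplit Cartan `C_ns` w.r.t. the nonresidue `δ`:
matrices of the form `[[a, δb], [b, a]]`. -/
def InCns {ℓ : ℕ} (δ : ZMod ℓ) (g : GL2 ℓ) : Prop :=
  mat g 1 1 = mat g 0 0 ∧ mat g 0 1 = δ * mat g 1 0

/-- Membership in `N_ns \ C_ns` (as a matrix shape): `[[a, -δb], [b, -a]]`. -/
def InNnsAnti {ℓ : ℕ} (δ : ZMod ℓ) (g : GL2 ℓ) : Prop :=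
  mat g 1 1 = - mat g 0 0 ∧ mat g 0 1 = - (δ * mat g 1 0)

/-- Membership in the normalizer `N_ns` of the nonsplit Cartan. -/
def InNns {ℓ : ℕ} (δ : ZMod ℓ) (g : GL2 ℓ) : Prop := InCns δ g ∨ InNnsAnti δ g

/-- `PGL₂(F_ℓ)`: the quotient of `GL₂(F_ℓ)` by its center (the scalar matrices). -/
abbrev PGL2 (ℓ : ℕ) : Type := GL2 ℓ ⧸ Subgroup.center (GL2 ℓ)

/-- The natural projection `GL₂(F_ℓ) →* PGL₂(F_ℓ)`. -/
def toPGL (ℓ : ℕ) : GL2 ℓ →* PGL2 ℓ := QuotientGroup.mk' _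

/-- The image of a subgroup of `GL₂(F_ℓ)` in `PGL₂(F_ℓ)`. -/
def projImage {ℓ : ℕ} (G : Subgroup (GL2 ℓ)) : Subgroup (PGL2 ℓ) := G.map (toPGL ℓ)

/-- `H` is isomorphic to the alternating group `A₄`. -/
def IsA4 {ℓ : ℕ} (H : Subgroup (PGL2 ℓ)) : Prop := Nonempty (H ≃* alternatingGroup (Fin 4))

/-- `H` is isomorphic to the symmetric group `S₄`. -/
def IsS4 {ℓ : ℕ} (H : Subgroup (PGL2 ℓ)) : Prop := Nonempty (H ≃* Equiv.Perm (Fin 4))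

/-- `H` is isomorphic to the alternating group `A₅`. -/
def IsA5 {ℓ : ℕ} (H : Subgroup (PGL2 ℓ)) : Prop := Nonempty (H ≃* alternatingGroup (Fin 5))

/-!
A trace-zero `g ∈ GL₂(F_ℓ)` has characteristic polynomial `X² + det g`, and since `ℓ` is odd it
is not scalar, so it admits a cyclic vector and is conjugate to the companion matrix of that
polynomial. Any two such matrices are therefore conjugate, and `N_ns` contains one: if `-det g`
is a square `t²` take `diag(t, -t)`, otherwise `-det g = δ s²` because a product of two
nonsquares is a square, and take `[[0, δs], [s, 0]]`.
-/

section TwoByTwo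

variable {K : Type*} [Field K]

def cyclicBasisMatrix (M : Matrix (Fin 2) (Fin 2) K) (v : Fin 2 → K) :
    Matrix (Fin 2) (Fin 2) K :=
  (of ![v, M *ᵥ v])ᵀ

-- Cayley–Hamilton: `M (M v) = M.trace • M v - M.det • v`.
lemma mul_cyclicBasisMatrix (M : Matrix (Fin 2) (Fin 2) K) (v : Fin 2 → K) :
    M * cyclicBasisMatrix M v = cyclicBasisMatrix M v * !![0, -M.det; 1, M.trace] := by
  ext i j
  fin_cases i <;> fin_cases j <;>
    simp [cyclicBasisMatrix, mul_apply, Fin.sum_univ_two, det_fin_two, trace_fin_two] <;> ring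

lemma exists_det_cyclicBasisMatrix_ne_zero {M : Matrix (Fin 2) (Fin 2) K}
    (hM : M ∉ Set.range (scalar (Fin 2))) :
    ∃ v, (cyclicBasisMatrix M v).det ≠ 0 := by
  by_contra! h
  have h₀ : M 1 0 = 0 := by simpa [cyclicBasisMatrix, det_fin_two] using h ![1, 0]
  have h₁ : M 0 1 = 0 := by simpa [cyclicBasisMatrix, det_fin_two] using h ![0, 1]
  have h₂ : M 1 1 = M 0 0 := by
    simpa [cyclicBasisMatrix, det_fin_two, h₀, h₁, sub_eq_zero] using h ![1, 1]
  refine hM ⟨M 0 0, ?_⟩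
  ext i j
  fin_cases i <;> fin_cases j <;> simp [h₀, h₁, h₂]

lemma exists_conj_eq_companion {g : GL (Fin 2) K}
    (hg : (g : Matrix (Fin 2) (Fin 2) K) ∉ Set.range (scalar (Fin 2))) :
    ∃ P : GL (Fin 2) K, ((P⁻¹ * g * P : GL (Fin 2) K) : Matrix (Fin 2) (Fin 2) K) =
      !![0, -(g : Matrix (Fin 2) (Fin 2) K).det; 1, (g : Matrix (Fin 2) (Fin 2) K).trace] := by
  obtain ⟨v, hv⟩ := exists_det_cyclicBasisMatrix_ne_zero hg
  set P := GeneralLinearGroup.mkOfDetNeZero _ hv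
  have hP : (P : Matrix (Fin 2) (Fin 2) K) = cyclicBasisMatrix g v := rfl
  refine ⟨P, ?_⟩
  rw [Units.val_mul, Units.val_mul, mul_assoc, hP, mul_cyclicBasisMatrix, ← hP, ← mul_assoc,
    ← Units.val_mul, inv_mul_cancel, Units.val_one, one_mul]

lemma exists_conj_eq_of_trace_eq_of_det_eq {g h : GL (Fin 2) K}
    (hg : (g : Matrix (Fin 2) (Fin 2) K) ∉ Set.range (scalar (Fin 2)))
    (hh : (h : Matrix (Fin 2) (Fin 2) K) ∉ Set.range (scalar (Fin 2)))
    (htr : (g : Matrix (Fin 2) (Fin 2) K).trace = (h : Matrix (Fin 2) (Fin 2) K).trace)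
    (hdet : (g : Matrix (Fin 2) (Fin 2) K).det = (h : Matrix (Fin 2) (Fin 2) K).det) :
    ∃ x : GL (Fin 2) K, x * g * x⁻¹ = h := by
  obtain ⟨P, hP⟩ := exists_conj_eq_companion hg
  obtain ⟨Q, hQ⟩ := exists_conj_eq_companion hh
  have hPQ : P⁻¹ * g * P = Q⁻¹ * h * Q := Units.ext (by rw [hP, hQ, htr, hdet])
  refine ⟨Q * P⁻¹, ?_⟩
  calc Q * P⁻¹ * g * (Q * P⁻¹)⁻¹ = Q * (P⁻¹ * g * P) * Q⁻¹ := by group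
    _ = Q * (Q⁻¹ * h * Q) * Q⁻¹ := by rw [hPQ]
    _ = h := by group

lemma notMem_range_scalar_of_trace_eq_zero [NeZero (2 : K)] {M : Matrix (Fin 2) (Fin 2) K}
    (htr : M.trace = 0) (hdet : M.det ≠ 0) : M ∉ Set.range (scalar (Fin 2)) := by
  rintro ⟨c, rfl⟩
  have hc : c = 0 := by simpa [trace_fin_two, ← two_mul, two_ne_zero] using htr
  simp [hc] at hdet

end TwoByTwo

lemma FiniteField.isSquare_mul_of_not_isSquare {F : Type*} [Field F] [Finite F] {a b : F}
    (ha : ¬ IsSquare a) (hb : ¬ IsSquare b) : IsSquare (a * b) := by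
  classical
  have := Fintype.ofFinite F
  have hab : a * b ≠ 0 :=
    mul_ne_zero (by rintro rfl; exact ha .zero) (by rintro rfl; exact hb .zero)
  rw [← quadraticChar_one_iff_isSquare hab, map_mul, quadraticChar_neg_one_iff_not_isSquare.mpr ha,
    quadraticChar_neg_one_iff_not_isSquare.mpr hb]
  norm_num

lemma exists_inNns_trace_eq_zero_det_eq {ℓ : ℕ} [Fact ℓ.Prime] {δ : ZMod ℓ} (hδ : ¬ IsSquare δ)
    {d : ZMod ℓ} (hd : d ≠ 0) :
    ∃ n : GL2 ℓ, InNns δ n ∧ (mat n).trace = 0 ∧ (mat n).det = d := by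
  by_cases hsq : IsSquare (-d)
  · obtain ⟨t, ht⟩ := hsq
    have hdet : (!![t, 0; 0, -t] : Matrix (Fin 2) (Fin 2) (ZMod ℓ)).det = d := by
      rw [det_fin_two_of]; linear_combination ht
    refine ⟨.mkOfDetNeZero _ (hdet ▸ hd), Or.inr ?_, ?_, hdet⟩ <;>
      simp [mat, InNnsAnti, trace_fin_two]
  · obtain ⟨c, hc⟩ := FiniteField.isSquare_mul_of_not_isSquare hsq hδ
    have hδ0 : δ ≠ 0 := by rintro rfl; exact hδ .zero
    have hdet : (!![0, δ * (c / δ); c / δ, 0] : Matrix (Fin 2) (Fin 2) (ZMod ℓ)).det = d := by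
      rw [det_fin_two_of]; field_simp; linear_combination hc
    refine ⟨.mkOfDetNeZero _ (hdet ▸ hd), Or.inl ?_, ?_, hdet⟩ <;>
      simp [mat, InCns, trace_fin_two]

/-- A trace-zero element of `GL₂(F_ℓ)` lies in a conjugate of the normalizer
of the nonsplit Cartan subgroup. -/
theorem trace_zero_mem_conj_normalizer_nonsplit
    {ℓ : ℕ} [Fact ℓ.Prime] (hℓ : ℓ ≠ 2) (δ : ZMod ℓ) (hδ : ¬ IsSquare δ)
    (g : GL2 ℓ) (htr : Matrix.trace (mat g) = 0) :
    ∃ x : GL2 ℓ, InNns δ (x * g * x⁻¹) := by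
  have : NeZero (2 : ZMod ℓ) := ⟨Ring.two_ne_zero (by rwa [ZMod.ringChar_zmod_n])⟩
  obtain ⟨n, hn, hntr, hndet⟩ := exists_inNns_trace_eq_zero_det_eq hδ g.det_ne_zero
  obtain ⟨x, hx⟩ := exists_conj_eq_of_trace_eq_of_det_eq
    (notMem_range_scalar_of_trace_eq_zero htr g.det_ne_zero)
    (notMem_range_scalar_of_trace_eq_zero hntr (hndet ▸ g.det_ne_zero))
    (htr.trans hntr.symm) hndet.symm
  exact ⟨x, hx ▸ hn⟩
end

section
/- Let ℓ be a prime, let g ∈ GL₂(F_ℓ) have image h ∈ PGL₂(F_ℓ) of order r under the natural action of PGL₂(F_ℓ) on the projective line P¹(F_ℓ), let k be the number of points of P¹(F_ℓ) fixed by h, and let s be the number of h-orbits on P¹(F_ℓ). Then: (a) k is 0, 1, 2, or ℓ + 1; (b) each of the s − k nontrivial (non-singleton) orbits has size exactly r; and (c) if ℓ > 2, the sign of h as a permutation of P¹(F_ℓ) equals (−1)^s. -/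
open Matrix

open Projectivization in
/-- The projective line `P¹(F_ℓ)`. -/
abbrev Pline (ℓ : ℕ) [Fact ℓ.Prime] : Type :=
  Projectivization (ZMod ℓ) (Fin 2 → ZMod ℓ)

instance {ℓ : ℕ} [Fact ℓ.Prime] : Finite (Pline ℓ) := Quotient.finite _

noncomputable instance {ℓ : ℕ} [Fact ℓ.Prime] : Fintype (Pline ℓ) := Fintype.ofFinite _

noncomputable instance {ℓ : ℕ} [Fact ℓ.Prime] : DecidableEq (Pline ℓ) := Classical.decEq _

/-- The linear automorphism of `F_ℓ²` given by `g ∈ GL₂(F_ℓ)`. -/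
def glEquiv {ℓ : ℕ} (g : GL2 ℓ) : (Fin 2 → ZMod ℓ) ≃ₗ[ZMod ℓ] (Fin 2 → ZMod ℓ) :=
  (Matrix.GeneralLinearGroup.toLin g).toLinearEquiv

/-- The permutation of `P¹(F_ℓ)` induced by `g ∈ GL₂(F_ℓ)` (the natural action of the
image of `g` in `PGL₂(F_ℓ)`). -/
noncomputable def projPerm {ℓ : ℕ} [Fact ℓ.Prime] (g : GL2 ℓ) : Equiv.Perm (Pline ℓ) :=
  Equiv.ofBijective
    (Projectivization.map (glEquiv g).toLinearMap (glEquiv g).injective)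
    (Finite.injective_iff_bijective.mp (Projectivization.map_injective _ _))

/-!
A lift `g ∈ GL₂` of `h ≠ 1` fixes at most two points of `P¹`: each fixed point is an eigenline
of `g`, a plane carries no three eigenvectors with pairwise distinct eigenvalues, and two
independent eigenvectors with a common eigenvalue make `g` scalar. If a power `g ^ n` fixes a
point `x` moved by `g`, then `x` and `g x` are independent eigenvectors of `g ^ n` with the same
eigenvalue, so `h ^ n = 1`: the group `⟨h⟩` acts freely off the fixed points of `h`, and every
nontrivial orbit has size `r`. Finally `sign σ = (-1) ^ (n - #orbits)` for any permutation `σ` of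
an `n`-element set, and `n = ℓ + 1` is even when `ℓ` is odd.
-/

open Module Projectivization
open scoped LinearAlgebra.Projectivization

section PlaneAction

variable {K V G : Type*} [Field K] [AddCommGroup V] [Module K V] [Group G]
  [DistribMulAction G V] [SMulCommClass G K V]

theorem Projectivization.smul_eq_self_iff (g : G) (x : ℙ K V) :
    g • x = x ↔ ∃ c : K, g • x.rep = c • x.rep := by
  conv_lhs => rw [← mk_rep x, smul_mk, mk_eq_mk_iff']
  simp only [eq_comm]

theorem Projectivization.smul_eq_self_of_forall_smul_eq_smul {g : G} {c : K}
    (hg : ∀ v : V, g • v = c • v) (x : ℙ K V) : g • x = x :=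
  (smul_eq_self_iff g x).2 ⟨c, hg x.rep⟩

theorem smul_eq_smul_of_linearIndependent_pair (hV : finrank K V = 2) {v w : V}
    (hvw : LinearIndependent K ![v, w]) {g : G} {c : K} (hv : g • v = c • v)
    (hw : g • w = c • w) (u : V) : g • u = c • u := by
  let b := basisOfLinearIndependentOfCardEqFinrank hvw (by simp [hV])
  have : DistribSMul.toLinearMap K V g = c • LinearMap.id :=
    b.ext fun i ↦ by fin_cases i <;> simpa [b]
  exact LinearMap.congr_fun this u

theorem Projectivization.exists_smul_eq_smul_of_commute (hV : finrank K V = 2) {g h : G}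
    (hgh : Commute g h) {x : ℙ K V} (hx : h • x = x) (hgx : g • x ≠ x) :
    ∃ c : K, ∀ u : V, h • u = c • u := by
  obtain ⟨c, hc⟩ := (smul_eq_self_iff h x).1 hx
  have hind : LinearIndependent K ![x.rep, g • x.rep] := by
    have hgv : g • x.rep ≠ 0 := (smul_ne_zero_iff_ne g).2 x.rep_nonzero
    rw [← independent_mk_iff_LinearIndependent x.rep_nonzero hgv, independent_pair_iff_ne,
      ← smul_mk g x.rep_nonzero, mk_rep]
    exact hgx.symm
  refine ⟨c, smul_eq_smul_of_linearIndependent_pair hV hind hc ?_⟩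
  rw [smul_smul, ← hgh.eq, mul_smul, hc, smul_comm]

theorem Projectivization.exists_smul_eq_smul_of_three_fixed (hV : finrank K V = 2) {g : G}
    {x y z : ℙ K V} (hxy : x ≠ y) (hxz : x ≠ z) (hyz : y ≠ z)
    (hx : g • x = x) (hy : g • y = y) (hz : g • z = z) :
    ∃ c : K, ∀ u : V, g • u = c • u := by
  obtain ⟨a, ha⟩ := (smul_eq_self_iff g x).1 hx
  obtain ⟨b, hb⟩ := (smul_eq_self_iff g y).1 hy
  obtain ⟨e, he⟩ := (smul_eq_self_iff g z).1 hz
  have of_common_eigenvalue {p q : ℙ K V} (hpq : p ≠ q) {c : K} (hp : g • p.rep = c • p.rep)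
      (hq : g • q.rep = c • q.rep) : ∃ c : K, ∀ u : V, g • u = c • u :=
    ⟨c, smul_eq_smul_of_linearIndependent_pair hV (linearIndependent_pair_iff_ne.2 hpq) hp hq⟩
  by_cases hab : a = b
  · exact of_common_eigenvalue hxy ha (hab ▸ hb)
  by_cases hae : a = e
  · exact of_common_eigenvalue hxz ha (hae ▸ he)
  by_cases hbe : b = e
  · exact of_common_eigenvalue hyz hb (hbe ▸ he)
  have hind : LinearIndependent K ![x.rep, y.rep, z.rep] := by
    refine Module.End.eigenvectors_linearIndependent' (DistribSMul.toLinearMap K V g) ![a, b, e]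
      ?_ _ fun i ↦ ?_
    · intro i j hij
      fin_cases i <;> fin_cases j <;> simp at hij ⊢ <;> grind
    · fin_cases i <;> exact ⟨Module.End.mem_eigenspace_iff.2 ‹_›, rep_nonzero _⟩
  have : Module.Finite K V := Module.finite_of_finrank_pos (by omega)
  simpa [hV] using hind.fintype_card_le_finrank

end PlaneAction

section PermOrbits

open MulAction Subgroup Finset

namespace Equiv.Perm

variable {α : Type*} (σ : Perm α)

theorem orbitRel_zpowers_iff_sameCycle {x y : α} :
    orbitRel (zpowers σ) α x y ↔ σ.SameCycle y x := by
  rw [orbitRel_apply, mem_orbit_iff]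
  constructor
  · rintro ⟨⟨_, n, rfl⟩, h⟩
    exact ⟨n, h⟩
  · rintro ⟨n, h⟩
    exact ⟨⟨σ ^ n, n, rfl⟩, h⟩

variable [Fintype α] [DecidableEq α]

def orbitCycle : orbitRel.Quotient (zpowers σ) α → Perm α :=
  Quotient.lift σ.cycleOf fun _ _ h ↦ ((orbitRel_zpowers_iff_sameCycle σ).1 h).cycleOf_eq.symm

theorem orbitCycle_mk (x : α) : orbitCycle σ (Quotient.mk _ x) = σ.cycleOf x := rfl

theorem card_orbitCycle_eq_one :
    Nat.card {ω // orbitCycle σ ω = 1} = Nat.card {x // σ x = x} := by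
  refine (Nat.card_eq_of_bijective (fun x ↦ ⟨Quotient.mk _ x.1, (cycleOf_eq_one_iff σ).2 x.2⟩)
    ⟨fun x y hxy ↦ ?_, fun ω ↦ ?_⟩).symm
  · obtain ⟨n, hn⟩ :=
      (orbitRel_zpowers_iff_sameCycle σ).1 (Quotient.exact (congrArg Subtype.val hxy))
    rw [zpow_apply_eq_self_of_apply_eq_self y.2] at hn
    exact Subtype.ext hn.symm
  · obtain ⟨ω, hω⟩ := ω
    obtain ⟨x, rfl⟩ := Quotient.mk_surjective ω
    exact ⟨⟨x, (cycleOf_eq_one_iff σ).1 hω⟩, rfl⟩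

theorem card_orbitCycle_ne_one :
    Nat.card {ω // orbitCycle σ ω ≠ 1} = #σ.cycleFactorsFinset := by
  rw [← Nat.card_eq_finsetCard]
  refine Nat.card_eq_of_bijective
    (fun ω ↦ ⟨orbitCycle σ ω.1, ?_⟩) ⟨fun ω ω' h ↦ ?_, fun c ↦ ?_⟩
  · obtain ⟨ω, hω⟩ := ω
    obtain ⟨x, rfl⟩ := Quotient.mk_surjective ω
    exact cycleOf_ne_one_iff_mem_cycleFactorsFinset.1 hω
  · obtain ⟨ω, hx⟩ := ω
    obtain ⟨x, rfl⟩ := Quotient.mk_surjective ω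
    obtain ⟨ω', hy⟩ := ω'
    obtain ⟨y, rfl⟩ := Quotient.mk_surjective ω'
    rw [Ne, orbitCycle_mk, cycleOf_eq_one_iff, ← Ne, ← mem_support] at hx hy
    refine Subtype.ext (Quotient.sound ((orbitRel_zpowers_iff_sameCycle σ).2 ?_))
    exact (sameCycle_iff_cycleOf_eq_of_mem_support hy hx).2 (congrArg Subtype.val h).symm
  · obtain ⟨c, hc⟩ := c
    obtain ⟨x, hx⟩ := (mem_cycleFactorsFinset_iff.1 hc).1.nonempty_support
    have hcx := cycle_is_cycleOf hx hc
    refine ⟨⟨Quotient.mk _ x, ?_⟩, Subtype.ext hcx.symm⟩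
    rw [orbitCycle_mk, ← hcx]
    exact (mem_cycleFactorsFinset_iff.1 hc).1.ne_one

theorem card_orbitRel_quotient_zpowers :
    Nat.card (orbitRel.Quotient (zpowers σ) α) =
      Nat.card {x // σ x = x} + #σ.cycleFactorsFinset := by
  classical
  rw [← card_orbitCycle_eq_one, ← card_orbitCycle_ne_one, ← Nat.card_sum,
    Nat.card_congr (Equiv.sumCompl _)]

theorem sign_mul_neg_one_pow_card_orbits :
    sign σ * (-1) ^ Nat.card (orbitRel.Quotient (zpowers σ) α) = (-1) ^ Fintype.card α := by
  have hfix : Nat.card {x // σ x = x} + #σ.support = Fintype.card α := by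
    rw [Nat.card_eq_fintype_card, Fintype.card_subtype]
    exact card_filter_add_card_filter_not _
  have hcycles : Multiset.card σ.cycleType = #σ.cycleFactorsFinset := by
    rw [cycleType, Multiset.card_map, card_val]
  rw [sign_of_cycleType, sum_cycleType, hcycles, card_orbitRel_quotient_zpowers, ← pow_add,
    show #σ.support + #σ.cycleFactorsFinset + (Nat.card {x // σ x = x} + #σ.cycleFactorsFinset)
      = Fintype.card α + 2 * #σ.cycleFactorsFinset by omega, pow_add, pow_mul, neg_one_sq,
    one_pow, mul_one]

end Equiv.Perm

end PermOrbits

theorem Matrix.GeneralLinearGroup.mem_center_iff_exists_smul_eq_smul {n R : Type*} [Fintype n]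
    [DecidableEq n] [CommRing R] (g : GL n R) :
    g ∈ Subgroup.center (GL n R) ↔ ∃ c : R, ∀ v : n → R, g • v = c • v := by
  rw [mem_center_iff_val_mem_range_scalar]
  constructor
  · rintro ⟨c, hc⟩
    refine ⟨c, fun v ↦ ?_⟩
    change (g : Matrix n n R) *ᵥ v = c • v
    ext i
    simp [← hc, mulVec_diagonal]
  · rintro ⟨c, hc⟩
    refine ⟨c, mulVec_injective (funext fun v ↦ ?_)⟩
    ext i
    simp only [scalar_apply, mulVec_diagonal]
    exact (congrFun (hc v) i).symm

theorem finrank_plane (ℓ : ℕ) [Fact ℓ.Prime] : finrank (ZMod ℓ) (Fin 2 → ZMod ℓ) = 2 :=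
  finrank_fin_fun _

section ProjectiveLine

variable {ℓ : ℕ} [Fact ℓ.Prime]

theorem projPerm_eq_toPermHom (g : GL2 ℓ) :
    projPerm g = MulAction.toPermHom (GL2 ℓ) (Pline ℓ) g :=
  Equiv.ext fun _ ↦ rfl

theorem projPerm_apply (g : GL2 ℓ) (x : Pline ℓ) : projPerm g x = g • x := rfl

theorem projPerm_zpow (g : GL2 ℓ) (n : ℤ) : projPerm (g ^ n) = projPerm g ^ n := by
  simp only [projPerm_eq_toPermHom, map_zpow]

theorem projPerm_pow (g : GL2 ℓ) (n : ℕ) : projPerm (g ^ n) = projPerm g ^ n := by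
  simp only [projPerm_eq_toPermHom, map_pow]

theorem card_pline : Nat.card (Pline ℓ) = ℓ + 1 := by
  rw [card_of_finrank_two (ZMod ℓ) (Fin 2 → ZMod ℓ) (finrank_plane ℓ), Nat.card_zmod]

theorem projPerm_eq_one_iff_exists_smul_eq_smul (g : GL2 ℓ) :
    projPerm g = 1 ↔ ∃ c : ZMod ℓ, ∀ v : Fin 2 → ZMod ℓ, g • v = c • v := by
  refine ⟨fun hg ↦ ?_, fun ⟨c, hc⟩ ↦ Equiv.ext (smul_eq_self_of_forall_smul_eq_smul hc)⟩
  have hfix (x : Pline ℓ) : g • x = x := congr($hg x)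
  have : 2 < Nat.card (Pline ℓ) := by
    rw [card_pline]; linarith [(Fact.out : ℓ.Prime).two_le]
  rw [Nat.card_eq_fintype_card] at this
  obtain ⟨x, y, z, hxy, hxz, hyz⟩ := Fintype.two_lt_card_iff.1 this
  exact exists_smul_eq_smul_of_three_fixed (finrank_plane ℓ) hxy hxz hyz (hfix x) (hfix y) (hfix z)

theorem projPerm_eq_one_iff (g : GL2 ℓ) : projPerm g = 1 ↔ g ∈ Subgroup.center (GL2 ℓ) := by
  rw [projPerm_eq_one_iff_exists_smul_eq_smul,
    Matrix.GeneralLinearGroup.mem_center_iff_exists_smul_eq_smul]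

theorem orderOf_toPGL (g : GL2 ℓ) : orderOf (toPGL ℓ g) = orderOf (projPerm g) := by
  refine orderOf_eq_orderOf_iff.2 fun n ↦ ?_
  rw [← map_pow, ← projPerm_pow, projPerm_eq_one_iff, toPGL, QuotientGroup.mk'_apply,
    QuotientGroup.eq_one_iff]

theorem card_fixed_projPerm_le_two {g : GL2 ℓ} (hg : projPerm g ≠ 1) :
    Nat.card {x : Pline ℓ // projPerm g x = x} ≤ 2 := by
  by_contra! h
  rw [Nat.card_eq_fintype_card] at h
  obtain ⟨⟨x, hx⟩, ⟨y, hy⟩, ⟨z, hz⟩, hxy, hxz, hyz⟩ := Fintype.two_lt_card_iff.1 h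
  refine hg ((projPerm_eq_one_iff_exists_smul_eq_smul g).2 ?_)
  exact exists_smul_eq_smul_of_three_fixed (finrank_plane ℓ) (by simpa using hxy)
    (by simpa using hxz) (by simpa using hyz) hx hy hz

theorem card_orbit_zpowers_projPerm {g : GL2 ℓ} {x : Pline ℓ} (hx : projPerm g x ≠ x) :
    Nat.card (MulAction.orbit (Subgroup.zpowers (projPerm g)) x) = orderOf (projPerm g) := by
  have hstab : MulAction.stabilizer (Subgroup.zpowers (projPerm g)) x = ⊥ := by
    refine (Subgroup.eq_bot_iff_forall _).2 ?_
    rintro ⟨_, n, rfl⟩ hn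
    refine Subtype.ext ?_
    change projPerm g ^ n = 1
    rw [← projPerm_zpow, projPerm_eq_one_iff_exists_smul_eq_smul]
    refine exists_smul_eq_smul_of_commute (finrank_plane ℓ) (Commute.self_zpow g n) ?_ hx
    rwa [← projPerm_apply, projPerm_zpow]
  rw [Nat.card_coe_set_eq, ← MulAction.index_stabilizer, hstab, Subgroup.index_bot,
    Nat.card_zpowers]

end ProjectiveLine

/-- Let `g ∈ GL₂(F_ℓ)` have image `h ∈ PGL₂(F_ℓ)` of order `r`, acting on
`P¹(F_ℓ)` via the permutation `σ = projPerm g`; let `k` be the number of fixed points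
and `s` the number of orbits of `σ` on `P¹(F_ℓ)`.  Then `k ∈ {0, 1, 2, ℓ + 1}`, every
nontrivial orbit has size exactly `r`, and for `ℓ > 2` the sign of `σ` is `(-1)^s`. -/
theorem perm_of_projective_line
    {ℓ : ℕ} [Fact ℓ.Prime] (g : GL2 ℓ)
    (r k s : ℕ)
    (hr : r = orderOf (toPGL ℓ g))
    (hk : k = Nat.card {x : Pline ℓ // projPerm g x = x})
    (hs : s = Nat.card
      (MulAction.orbitRel.Quotient (Subgroup.zpowers (projPerm g)) (Pline ℓ))) :
    (k = 0 ∨ k = 1 ∨ k = 2 ∨ k = ℓ + 1) ∧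
    (∀ x : Pline ℓ, projPerm g x ≠ x →
      Nat.card (MulAction.orbit (Subgroup.zpowers (projPerm g)) x) = r) ∧
    (2 < ℓ → Equiv.Perm.sign (projPerm g) = (-1 : ℤˣ) ^ s) := by
  rw [orderOf_toPGL] at hr
  refine ⟨?_, fun x hx ↦ hr ▸ card_orbit_zpowers_projPerm hx, fun hℓ ↦ ?_⟩
  · by_cases hg : projPerm g = 1
    · simp only [hk, hg, Equiv.Perm.one_apply, Nat.card_subtype_true, card_pline, or_true]
    · have := card_fixed_projPerm_le_two hg
      omega
  · have hsign := (projPerm g).sign_mul_neg_one_pow_card_orbits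
    have hodd : Odd ℓ := (Fact.out : ℓ.Prime).odd_of_ne_two hℓ.ne'
    rw [← hs, ← Nat.card_eq_fintype_card, card_pline, hodd.add_one.neg_one_pow] at hsign
    rw [eq_inv_of_mul_eq_one_left hsign, Int.units_inv_eq_self]
end

section
/- Let ℓ be an odd prime and let G be a subgroup of GL₂(F_ℓ) such that every element of G lies in a conjugate of the nonsplit Cartan subgroup C_ns, and suppose moreover that the determinant map G → F_ℓˣ is surjective. Then either G is contained in a conjugate of C_ns, or G is contained in a conjugate of N_ns and ℓ ≡ 1 (mod 4). -/
open Matrix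

/-!
Every non-central element of `G` is conjugate into `C_ns`, so it lies in a torus (a conjugate of
`C_ns`), which is its centralizer; distinct tori meet in the scalars `Z`. Double counting the
pairs `(h, y)` with `h y h⁻¹` in a torus `T` shows that the `H`-conjugates of `T` cover
`|H| (1 - |Z ∩ H| / |T ∩ H|) / [N_H(T) : T ∩ H]` non-central elements of a subgroup `H`, and
`[N_H(T) : T ∩ H] ≤ 2`. If `T` is self-normalizing in `H` and the tori of `H` are large compared
with `Z ∩ H`, a second conjugacy class of tori does not fit, so `H ≤ T`.

Elements of `N_ns \ C_ns` have trace `0`, so for them `-det` is a non-square. Let `g₁ ∈ G` have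
non-square determinant. If `ℓ ≡ 3 (mod 4)`, take `H = G` and `T` the torus of `g₁`: multiplying by
`g₁` shows `T` is self-normalizing, and `g₁` is a non-square in `T ≅ 𝔽_{ℓ²}ˣ`, so a power of it has
order `8` while `|Z ∩ G|` divides `ℓ - 1 ≡ 2 (mod 4)`; thus `[T ∩ G : Z ∩ G] ≥ 4`. If
`ℓ ≡ 1 (mod 4)`, take for `H` the elements of square determinant: as `-1` is a square, they have
nonzero trace, so every torus is self-normalizing in `H` and of index `≥ 3` over `Z ∩ H` (index `2`
would give a non-scalar with scalar square, hence of trace `0`). Then `H` lies in a torus, or in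
`Z`, and `G` normalizes it.
-/

/-- Double counting of the pairs `(g, y)` with `g ∈ K` and `g * y * g⁻¹ ∈ S`. -/
theorem ncard_conjCover_mul_card {Γ : Type*} [Group Γ] [Finite Γ] {K N : Subgroup Γ}
    {S : Set Γ} (hNK : N ≤ K) (hS : ∀ c ∈ S, ∀ g ∈ K, g * c * g⁻¹ ∈ S ↔ g ∈ N) :
    {y | ∃ g ∈ K, g * y * g⁻¹ ∈ S}.ncard * Nat.card N = Nat.card K * S.ncard := by
  classical
  have := Fintype.ofFinite Γ
  set T := {y | ∃ g ∈ K, g * y * g⁻¹ ∈ S}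
  have hcount := Finset.card_mul_eq_card_mul (fun g y => g * y * g⁻¹ ∈ S)
    (s := (K : Set Γ).toFinset) (t := T.toFinset) (m := S.ncard) (n := Nat.card N) ?_ ?_
  · rw [← Set.ncard_eq_toFinset_card', ← Set.ncard_eq_toFinset_card',
      ← Nat.card_coe_set_eq (K : Set Γ)] at hcount
    exact hcount.symm
  · intro g hg
    rw [Set.mem_toFinset, SetLike.mem_coe] at hg
    rw [Finset.bipartiteAbove, ← Set.ncard_coe_finset, Finset.coe_filter]
    convert Set.ncard_image_of_injective S
      ((mul_left_injective g).comp (mul_right_injective g⁻¹)) using 2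
    ext y
    simp only [Set.mem_toFinset, Set.mem_ofPred_eq, Set.mem_image, Function.comp_apply, T]
    constructor
    · rintro ⟨-, hy⟩
      exact ⟨_, hy, by group⟩
    · rintro ⟨c, hc, rfl⟩
      exact ⟨⟨g, hg, by simpa [mul_assoc] using hc⟩, by simpa [mul_assoc] using hc⟩
  · intro y hy
    obtain ⟨g₀, hg₀, hy⟩ := Set.mem_toFinset.mp hy
    rw [Finset.bipartiteBelow, ← Set.ncard_coe_finset, Finset.coe_filter,
      ← SetLike.coe_sort_coe, Nat.card_coe_set_eq]
    convert Set.ncard_image_of_injective (N : Set Γ) (mul_left_injective g₀) using 2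
    ext g
    simp only [Set.mem_toFinset, SetLike.mem_coe, Set.mem_ofPred_eq, Set.mem_image]
    constructor
    · rintro ⟨hg, hgy⟩
      refine ⟨g * g₀⁻¹, (hS _ hy _ (mul_mem hg (inv_mem hg₀))).1 ?_, by group⟩
      simpa [mul_assoc] using hgy
    · rintro ⟨n, hn, rfl⟩
      have := (hS _ hy n (hNK hn)).2 hn
      exact ⟨mul_mem (hNK hn) hg₀, by simpa [mul_assoc] using this⟩

lemma FiniteField.isSquare_mul_iff {F : Type*} [Field F] [Fintype F] {a b : F} (ha : a ≠ 0)
    (hb : b ≠ 0) : IsSquare (a * b) ↔ (IsSquare a ↔ IsSquare b) := by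
  classical
  rw [← quadraticChar_one_iff_isSquare (mul_ne_zero ha hb), ← quadraticChar_one_iff_isSquare ha,
    ← quadraticChar_one_iff_isSquare hb, map_mul]
  rcases quadraticChar_dichotomy ha with h | h <;>
    rcases quadraticChar_dichotomy hb with h' | h' <;> simp [h, h']

lemma Subgroup.conj_mem_center_iff {G : Type*} [Group G] {g c : G} :
    g * c * g⁻¹ ∈ Subgroup.center G ↔ c ∈ Subgroup.center G :=
  ⟨fun h => by simpa [mul_assoc] using Subgroup.Normal.conj_mem inferInstance _ h g⁻¹,
    fun h => Subgroup.Normal.conj_mem inferInstance _ h g⟩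

lemma Subgroup.card_mul_relIndex {G : Type*} [Group G] {K L : Subgroup G} (h : K ≤ L) :
    Nat.card K * K.relIndex L = Nat.card L := by
  simpa [Subgroup.relIndex_bot_left] using Subgroup.relIndex_mul_relIndex ⊥ K L bot_le h

lemma Subgroup.mul_card_le_card_of_le_relIndex {G : Type*} [Group G] {K L : Subgroup G}
    (h : K ≤ L) {r : ℕ} (hr : r ≤ K.relIndex L) : r * Nat.card K ≤ Nat.card L := by
  rw [← Subgroup.card_mul_relIndex h, mul_comm]
  exact Nat.mul_le_mul_left _ hr

lemma Subgroup.two_le_relIndex {G : Type*} [Group G] {K L : Subgroup G} [Finite L] (h : K ≤ L)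
    {x : G} (hxL : x ∈ L) (hxK : x ∉ K) : 2 ≤ K.relIndex L := by
  have h0 : K.relIndex L ≠ 0 := fun h0 => by
    simpa [h0] using (Subgroup.card_mul_relIndex h).trans_ne Nat.card_pos.ne'
  have h1 : K.relIndex L ≠ 1 := fun h1 => hxK (Subgroup.relIndex_eq_one.mp h1 hxL)
  omega

lemma Nat.four_mul_le_of_dvd {s a m : ℕ} (ha : 0 < a) (h8 : 8 ∣ a) (hsa : s ∣ a) (hsm : s ∣ m)
    (hm : m % 4 = 2) : 4 * s ≤ a := by
  obtain ⟨k, rfl⟩ := hsa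
  obtain ⟨k₁, k₂, hk₁, hk₂, h8⟩ := Nat.dvd_mul.mp h8
  have hk₁m : ¬ 4 ∣ k₁ := fun h => by have := (h.trans hk₁).trans hsm; omega
  have hk₁8 : k₁ ≤ 8 := Nat.le_of_dvd (by norm_num) ⟨k₂, h8.symm⟩
  have h4 : 4 ∣ k := by
    refine Dvd.dvd.trans ?_ hk₂
    interval_cases k₁ <;> omega
  have hk : 0 < k := Nat.pos_of_mul_pos_left ha
  nlinarith [Nat.le_of_dvd hk h4]

-- With `c₀ = n (a₀ - s) / a₀` and `c₁ ≥ n (a₁ - s) / (2 a₁)`, two disjoint covers and the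
-- `s` scalars exceed `n` unless `s (a₀ + 2 a₁) > a₀ a₁`.
lemma mul_lt_of_cover_counts {n s a₀ a₁ c₀ c₁ N₁ : ℕ} (hs : 0 < s) (ha₀ : s ≤ a₀)
    (ha₁ : s ≤ a₁) (hN₁ : N₁ ≤ 2 * a₁) (h₀ : c₀ * a₀ = n * (a₀ - s))
    (h₁ : c₁ * N₁ = n * (a₁ - s)) (hsum : c₀ + c₁ + s ≤ n) : a₀ * a₁ < s * (a₀ + 2 * a₁) := by
  by_contra! hbound
  have h₁' : n * (a₁ - s) ≤ c₁ * (2 * a₁) := h₁ ▸ Nat.mul_le_mul_left c₁ hN₁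
  have hsa₀ : 0 < s * a₀ * a₁ := Nat.mul_pos (Nat.mul_pos hs (hs.trans_le ha₀)) (hs.trans_le ha₁)
  have e₀ : c₀ * a₀ * (2 * a₁) = n * (a₀ - s) * (2 * a₁) := by rw [h₀]
  have e₁ := Nat.mul_le_mul_left (2 * a₀ * a₁) hsum
  have e₂ := Nat.mul_le_mul_left a₀ h₁'
  have e₃ := Nat.mul_le_mul_left n hbound
  zify [ha₀, ha₁] at e₀ e₁ e₂ e₃ hsa₀
  nlinarith

lemma ZMod.pow_div_two_eq_neg_one {p : ℕ} [Fact p.Prime] {a : ZMod p} (ha : ¬ IsSquare a) :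
    a ^ (p / 2) = -1 :=
  have ha0 : a ≠ 0 := fun h => ha (h ▸ IsSquare.zero)
  (ZMod.pow_div_two_eq_neg_one_or_one p ha0).resolve_left
    fun h => ha ((ZMod.euler_criterion p ha0).mpr h)

namespace NonsplitCartan

variable {ℓ : ℕ}

lemma mat_mul (g h : GL2 ℓ) : mat (g * h) = mat g * mat h := rfl

lemma mat_inv (g : GL2 ℓ) : mat g⁻¹ = (mat g)⁻¹ := Matrix.coe_units_inv g

lemma det_mat_ne_zero [Fact ℓ.Prime] (g : GL2 ℓ) : (mat g).det ≠ 0 :=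
  (Matrix.isUnit_iff_isUnit_det _ |>.mp (Units.isUnit g)).ne_zero

lemma trace_conj (X g : GL2 ℓ) : (mat (X * g * X⁻¹)).trace = (mat g).trace :=
  Matrix.trace_units_conj X (mat g)

lemma det_conj (X g : GL2 ℓ) : (mat (X * g * X⁻¹)).det = (mat g).det :=
  Matrix.det_units_conj X (mat g)

lemma two_ne_zero_of_ne_two [Fact ℓ.Prime] (hℓ : ℓ ≠ 2) : (2 : ZMod ℓ) ≠ 0 :=
  Ring.two_ne_zero (by rwa [ZMod.ringChar_zmod_n])

lemma mem_center_iff {g : GL2 ℓ} :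
    g ∈ Subgroup.center (GL2 ℓ) ↔ mat g 0 1 = 0 ∧ mat g 1 0 = 0 ∧ mat g 1 1 = mat g 0 0 := by
  rw [Matrix.GeneralLinearGroup.mem_center_iff_val_mem_range_scalar]
  unfold mat
  constructor
  · rintro ⟨a, ha⟩
    simp [← ha]
  · rintro ⟨h01, h10, h11⟩
    refine ⟨g.val 0 0, ?_⟩
    ext i j
    fin_cases i <;> fin_cases j <;> simp [h01, h10, h11]

lemma card_center [Fact ℓ.Prime] : Nat.card (Subgroup.center (GL2 ℓ)) = ℓ - 1 := by
  have hinj : Function.Injective (Matrix.GeneralLinearGroup.scalar (Fin 2) (R := ZMod ℓ)) := by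
    intro a b hab
    ext
    simpa using congr($hab 0 0)
  rw [Matrix.GeneralLinearGroup.center_eq_range_scalar,
    ← Nat.card_congr (MonoidHom.ofInjective hinj).toEquiv, Nat.card_eq_fintype_card,
    ZMod.card_units]

/-- `mat g = [[a, ε δ b], [b, ε a]]`: `C_ns` for `ε = 1`, and `N_ns \ C_ns` for `ε = -1`. -/
def CartanForm (δ ε : ZMod ℓ) (g : GL2 ℓ) : Prop :=
  mat g 1 1 = ε * mat g 0 0 ∧ mat g 0 1 = ε * (δ * mat g 1 0)

variable {δ ε ε' : ZMod ℓ} {g h : GL2 ℓ}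

lemma inCns_iff_cartanForm : InCns δ g ↔ CartanForm δ 1 g := by
  simp [InCns, CartanForm]

lemma inNnsAnti_iff_cartanForm : InNnsAnti δ g ↔ CartanForm δ (-1) g := by
  simp [InNnsAnti, CartanForm]

lemma CartanForm.mul (hε : ε * ε = 1) (hg : CartanForm δ ε g) (hh : CartanForm δ ε' h) :
    CartanForm δ (ε * ε') (g * h) := by
  obtain ⟨g11, g01⟩ := hg
  obtain ⟨h11, h01⟩ := hh
  constructor <;> simp only [mat_mul, Matrix.mul_apply, Fin.sum_univ_two, g11, g01, h11, h01]
  · linear_combination (-(mat g 1 0 * ε' * δ * mat h 1 0)) * hε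
  · linear_combination (-(mat g 0 0 * ε' * δ * mat h 1 0)) * hε

lemma CartanForm.inv [Fact ℓ.Prime] (hε : ε * ε = 1) (hg : CartanForm δ ε g) :
    CartanForm δ ε g⁻¹ := by
  obtain ⟨g11, g01⟩ := hg
  rw [CartanForm, mat_inv, Matrix.inv_def, Matrix.adjugate_fin_two]
  simp only [Matrix.smul_apply, Matrix.of_apply, Matrix.cons_val', Matrix.cons_val_zero,
    Matrix.cons_val_one, Matrix.empty_val', Matrix.cons_val_fin_one, smul_eq_mul, g11, g01]
  constructor
  · linear_combination (-(Ring.inverse (mat g).det * mat g 0 0)) * hε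
  · ring

lemma commute_of_inCns (hg : InCns δ g) (hh : InCns δ h) : Commute g h := by
  obtain ⟨g11, g01⟩ := hg
  obtain ⟨h11, h01⟩ := hh
  apply Units.ext
  change mat g * mat h = mat h * mat g
  ext i j
  fin_cases i <;> fin_cases j <;>
    simp only [Fin.zero_eta, Fin.mk_one, Matrix.mul_apply, Fin.sum_univ_two, g11, g01, h11, h01] <;>
    ring

variable [Fact ℓ.Prime]

lemma inNns_iff_exists_cartanForm : InNns δ g ↔ ∃ ε, ε * ε = 1 ∧ CartanForm δ ε g := by
  rw [InNns, inCns_iff_cartanForm, inNnsAnti_iff_cartanForm]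
  constructor
  · rintro (hg | hg)
    exacts [⟨1, one_mul 1, hg⟩, ⟨-1, by ring, hg⟩]
  · rintro ⟨ε, hε, hg⟩
    rcases mul_self_eq_one_iff.mp hε with rfl | rfl
    exacts [Or.inl hg, Or.inr hg]

lemma CartanForm.conj (hε : ε * ε = 1) (hε' : ε' * ε' = 1) (hg : CartanForm δ ε g)
    (hh : CartanForm δ ε' h) : CartanForm δ ε' (g * h * g⁻¹) := by
  have := (hg.mul hε hh).mul (by linear_combination (ε' * ε') * hε + hε') (hg.inv hε)
  rwa [show ε * ε' * ε = ε' by linear_combination ε' * hε] at this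

variable (δ) in
def nonsplitCartan : Subgroup (GL2 ℓ) where
  carrier := {g | InCns δ g}
  mul_mem' {g h} hg hh := by
    simp only [Set.mem_ofPred_eq, inCns_iff_cartanForm] at *
    simpa using hg.mul (one_mul 1) hh
  one_mem' := by simp [InCns, mat]
  inv_mem' {g} hg := by
    simp only [Set.mem_ofPred_eq, inCns_iff_cartanForm] at *
    exact hg.inv (one_mul 1)

variable (δ) in
def nonsplitCartanNormalizer : Subgroup (GL2 ℓ) where
  carrier := {g | InNns δ g}
  mul_mem' {g h} hg hh := by
    simp only [Set.mem_ofPred_eq, inNns_iff_exists_cartanForm] at *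
    obtain ⟨ε, hε, hg⟩ := hg
    obtain ⟨ε', hε', hh⟩ := hh
    exact ⟨ε * ε', by linear_combination (ε' * ε') * hε + hε', hg.mul hε hh⟩
  one_mem' := by simp [InNns, InCns, mat]
  inv_mem' {g} hg := by
    simp only [Set.mem_ofPred_eq, inNns_iff_exists_cartanForm] at *
    obtain ⟨ε, hε, hg⟩ := hg
    exact ⟨ε, hε, hg.inv hε⟩

variable (δ) in
/-- The conjugate `X⁻¹ C_ns X`. -/
def cartan (X : GL2 ℓ) : Subgroup (GL2 ℓ) := (nonsplitCartan δ).comap (MulAut.conj X).toMonoidHom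

variable (δ) in
def cartanNormalizer (X : GL2 ℓ) : Subgroup (GL2 ℓ) :=
  (nonsplitCartanNormalizer δ).comap (MulAut.conj X).toMonoidHom

variable {X c : GL2 ℓ}

lemma mem_cartan : g ∈ cartan δ X ↔ InCns δ (X * g * X⁻¹) := Iff.rfl

lemma mem_cartanNormalizer : g ∈ cartanNormalizer δ X ↔ InNns δ (X * g * X⁻¹) := Iff.rfl

lemma cartan_le_cartanNormalizer : cartan δ X ≤ cartanNormalizer δ X := fun _ => Or.inl

lemma center_le_cartan : Subgroup.center (GL2 ℓ) ≤ cartan δ X := by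
  intro z hz
  rw [mem_cartan, Subgroup.mem_center_iff.mp hz X, mul_inv_cancel_right]
  obtain ⟨h01, h10, h11⟩ := mem_center_iff.mp hz
  exact ⟨h11, by rw [h01, h10, mul_zero]⟩

lemma cartan_commute (hg : g ∈ cartan δ X) (hh : h ∈ cartan δ X) : Commute g h := by
  rw [mem_cartan] at hg hh
  have := (commute_of_inCns hg hh).eq
  rw [conj_mul, conj_mul] at this
  exact mul_left_cancel (mul_right_cancel this)

lemma mat_one_zero_ne_zero_of_inCns (hc : InCns δ c) (hcZ : c ∉ Subgroup.center (GL2 ℓ)) :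
    mat c 1 0 ≠ 0 := fun hb =>
  hcZ (mem_center_iff.mpr ⟨by rw [hc.2, hb, mul_zero], hb, hc.1⟩)

lemma cartanForm_of_mul_eq (hδ : δ ≠ 0) (hε : ε * ε = 1) {m m' : GL2 ℓ} (hm : InCns δ m)
    (hm' : InCns δ m') (hmZ : m ∉ Subgroup.center (GL2 ℓ)) (ha : mat m' 0 0 = mat m 0 0)
    (hb : mat m' 1 0 = ε * mat m 1 0) (hmul : h * m = m' * h) : CartanForm δ ε h := by
  have e00 : (mat h * mat m) 0 0 = (mat m' * mat h) 0 0 := congr(mat $hmul 0 0)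
  have e01 : (mat h * mat m) 0 1 = (mat m' * mat h) 0 1 := congr(mat $hmul 0 1)
  simp only [Matrix.mul_apply, Fin.sum_univ_two, hm.1, hm.2, hm'.2, ha, hb] at e00 e01
  have hb0 := mat_one_zero_ne_zero_of_inCns hm hmZ
  constructor
  · have : δ * mat m 1 0 * (mat h 0 0 - ε * mat h 1 1) = 0 := by linear_combination e01
    have := (mul_eq_zero.mp this).resolve_left (mul_ne_zero hδ hb0)
    linear_combination -ε * this - mat h 1 1 * hε
  · have : mat m 1 0 * (mat h 0 1 - ε * (δ * mat h 1 0)) = 0 := by linear_combination e00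
    linear_combination (mul_eq_zero.mp this).resolve_left hb0

lemma mem_cartan_of_commute (hδ : δ ≠ 0) (hc : c ∈ cartan δ X)
    (hcZ : c ∉ Subgroup.center (GL2 ℓ)) (hgc : Commute g c) : g ∈ cartan δ X := by
  have hmZ : X * c * X⁻¹ ∉ Subgroup.center (GL2 ℓ) := by rwa [Subgroup.conj_mem_center_iff]
  rw [mem_cartan] at hc
  rw [mem_cartan, inCns_iff_cartanForm]
  refine cartanForm_of_mul_eq hδ (one_mul 1) hc hc hmZ rfl (one_mul _).symm ?_
  rw [conj_mul, conj_mul, hgc.eq]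

lemma mem_cartanNormalizer_of_conj_mem (hℓ : ℓ ≠ 2) (hδ : δ ≠ 0) (hc : c ∈ cartan δ X)
    (hcZ : c ∉ Subgroup.center (GL2 ℓ)) (hgc : g * c * g⁻¹ ∈ cartan δ X) :
    g ∈ cartanNormalizer δ X := by
  rw [mem_cartan] at hc hgc
  have hmZ : X * c * X⁻¹ ∉ Subgroup.center (GL2 ℓ) := by rwa [Subgroup.conj_mem_center_iff]
  have hmul : X * g * X⁻¹ * (X * c * X⁻¹) = X * (g * c * g⁻¹) * X⁻¹ * (X * g * X⁻¹) := by group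
  have hconj : X * (g * c * g⁻¹) * X⁻¹ = (X * g * X⁻¹) * (X * c * X⁻¹) * (X * g * X⁻¹)⁻¹ := by
    group
  set m := X * c * X⁻¹
  set m' := X * (g * c * g⁻¹) * X⁻¹
  -- `m' = (X g X⁻¹) m (X g X⁻¹)⁻¹` has the trace and determinant of `m`, so `a' = a`, `b' = ± b`
  have htr := trace_conj (X * g * X⁻¹) m
  have hdet := det_conj (X * g * X⁻¹) m
  rw [← hconj, Matrix.trace_fin_two, Matrix.trace_fin_two, hc.1, hgc.1] at htr
  rw [← hconj, Matrix.det_fin_two, Matrix.det_fin_two, hc.1, hc.2, hgc.1, hgc.2] at hdet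
  have ha : mat m' 0 0 = mat m 0 0 := by
    have : (2 : ZMod ℓ) * (mat m' 0 0 - mat m 0 0) = 0 := by linear_combination htr
    linear_combination (mul_eq_zero.mp this).resolve_left (two_ne_zero_of_ne_two hℓ)
  have hb : mat m' 1 0 * mat m' 1 0 = mat m 1 0 * mat m 1 0 := by
    rw [ha] at hdet
    have : δ * (mat m' 1 0 * mat m' 1 0 - mat m 1 0 * mat m 1 0) = 0 := by
      linear_combination -hdet
    linear_combination (mul_eq_zero.mp this).resolve_left hδ
  rw [mem_cartanNormalizer, inNns_iff_exists_cartanForm]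
  rcases mul_self_eq_mul_self_iff.mp hb with hb | hb
  · exact ⟨1, one_mul 1,
      cartanForm_of_mul_eq hδ (one_mul 1) hc hgc hmZ ha (by rw [hb, one_mul]) hmul⟩
  · exact ⟨-1, by ring, cartanForm_of_mul_eq hδ (by ring) hc hgc hmZ ha (by rw [hb]; ring) hmul⟩

lemma conj_mem_cartan (hg : g ∈ cartanNormalizer δ X) (hc : c ∈ cartan δ X) :
    g * c * g⁻¹ ∈ cartan δ X := by
  rw [mem_cartanNormalizer, inNns_iff_exists_cartanForm] at hg
  obtain ⟨ε, hε, hg⟩ := hg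
  rw [mem_cartan, inCns_iff_cartanForm] at hc ⊢
  have := hg.conj hε (one_mul 1) hc
  rwa [show X * g * X⁻¹ * (X * c * X⁻¹) * (X * g * X⁻¹)⁻¹ = X * (g * c * g⁻¹) * X⁻¹ by group]
    at this

variable {y z : GL2 ℓ}

lemma not_isSquare_neg_det_of_trace_eq_zero (hℓ : ℓ ≠ 2) (hδ : ¬ IsSquare δ)
    (hg : g ∈ cartan δ X) (htr : (mat g).trace = 0) : ¬ IsSquare (-(mat g).det) := by
  rw [mem_cartan] at hg
  rw [← trace_conj X, Matrix.trace_fin_two, hg.1] at htr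
  rw [← det_conj X]
  set m := X * g * X⁻¹
  have ha : mat m 0 0 = 0 :=
    (mul_eq_zero.mp (show 2 * mat m 0 0 = 0 by linear_combination htr)).resolve_left
      (two_ne_zero_of_ne_two hℓ)
  have hdet : -(mat m).det = δ * (mat m 1 0 * mat m 1 0) := by
    rw [Matrix.det_fin_two, hg.1, hg.2, ha]; ring
  have hb : mat m 1 0 ≠ 0 := fun hb => det_mat_ne_zero m (by
    rw [Matrix.det_fin_two, hg.1, hg.2, ha, hb]; ring)
  rintro ⟨t, ht⟩
  refine hδ ⟨t / mat m 1 0, ?_⟩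
  rw [div_mul_div_comm, eq_div_iff (mul_ne_zero hb hb)]
  exact hdet.symm.trans ht

lemma trace_eq_zero_of_mem_cartanNormalizer (hg : g ∈ cartanNormalizer δ X)
    (hg' : g ∉ cartan δ X) : (mat g).trace = 0 := by
  rw [mem_cartanNormalizer] at hg
  rw [mem_cartan] at hg'
  rw [← trace_conj X, Matrix.trace_fin_two]
  rcases hg with hg | hg
  · exact absurd hg hg'
  · rw [hg.1, add_neg_cancel]

lemma trace_eq_zero_of_mul_self_mem_center (hz : z ∉ Subgroup.center (GL2 ℓ))
    (hz2 : z * z ∈ Subgroup.center (GL2 ℓ)) : (mat z).trace = 0 := by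
  obtain ⟨h01, h10, h11⟩ := mem_center_iff.mp hz2
  simp only [mat_mul, Matrix.mul_apply, Fin.sum_univ_two] at h01 h10 h11
  rw [Matrix.trace_fin_two]
  by_contra ht
  refine hz (mem_center_iff.mpr ⟨?_, ?_, ?_⟩)
  · exact (mul_eq_zero.mp (by linear_combination h01)).resolve_right ht
  · exact (mul_eq_zero.mp (by linear_combination h10)).resolve_right ht
  · linear_combination (mul_eq_zero.mp (by linear_combination h11 :
      (mat z 1 1 - mat z 0 0) * (mat z 0 0 + mat z 1 1) = 0)).resolve_right ht

lemma neg_one_ne_one (hℓ : ℓ ≠ 2) : (-1 : GL2 ℓ) ≠ 1 := by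
  intro h
  have : (-1 : ZMod ℓ) = 1 := by simpa using congr(($h : Matrix (Fin 2) (Fin 2) (ZMod ℓ)) 0 0)
  exact two_ne_zero_of_ne_two hℓ (by linear_combination -this)

/-- Frobenius: `C_ns ≅ F_{ℓ²}ˣ`, where `y ↦ y ^ ℓ` is conjugation and `y ^ (ℓ + 1)` the norm. -/
lemma mat_pow_card_add_one (hℓ : ℓ ≠ 2) (hδ : ¬ IsSquare δ) (hy : InCns δ y) :
    mat y ^ (ℓ + 1) = (mat y).det • 1 := by
  set U : Matrix (Fin 2) (Fin 2) (ZMod ℓ) := !![0, δ; 1, 0]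
  have hsplit : mat y = mat y 0 0 • 1 + mat y 1 0 • U := by
    ext i j
    fin_cases i <;> fin_cases j <;> simp [U, hy.1, hy.2, mul_comm]
  have hU2 : U * U = δ • 1 := by
    ext i j
    fin_cases i <;> fin_cases j <;> simp [U]
  have hUℓ : U ^ ℓ = -U := by
    obtain ⟨k, hk⟩ := (Fact.out : ℓ.Prime).odd_of_ne_two hℓ
    rw [congrArg (U ^ ·) (by omega : ℓ = 2 * (ℓ / 2) + 1), pow_succ, pow_mul, sq, hU2, smul_pow,
      one_pow,      ZMod.pow_div_two_eq_neg_one hδ, neg_one_smul, neg_mul, one_mul]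
  have hdet : (mat y).det = mat y 0 0 * mat y 0 0 - δ * (mat y 1 0 * mat y 1 0) := by
    rw [Matrix.det_fin_two, hy.1, hy.2]; ring
  have hcomm : Commute (mat y 0 0 • (1 : Matrix (Fin 2) (Fin 2) (ZMod ℓ))) (mat y 1 0 • U) :=
    ((Commute.one_left U).smul_left _).smul_right _
  rw [pow_succ, hdet]
  set a := mat y 0 0
  set b := mat y 1 0
  rw [hsplit, add_pow_char_of_commute ℓ hcomm, smul_pow, smul_pow, one_pow, ZMod.pow_card,
    ZMod.pow_card, hUℓ]
  ext i j
  fin_cases i <;> fin_cases j <;> simp [U, Matrix.mul_apply, Fin.sum_univ_two] <;> ring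

lemma pow_eq_neg_one (hℓ : ℓ ≠ 2) (hδ : ¬ IsSquare δ) (hy : InCns δ y)
    (hdet : ¬ IsSquare (mat y).det) : y ^ ((ℓ + 1) * (ℓ / 2)) = -1 := by
  apply Units.ext
  rw [pow_mul, Units.val_pow_eq_pow_val, Units.val_pow_eq_pow_val]
  change (mat y ^ (ℓ + 1)) ^ (ℓ / 2) = _
  rw [mat_pow_card_add_one hℓ hδ hy, smul_pow, one_pow, ZMod.pow_div_two_eq_neg_one hdet,
    neg_one_smul, Units.val_neg,    Units.val_one]

lemma exists_orderOf_pow_eq_eight (hℓ : ℓ ≠ 2) (hδ : ¬ IsSquare δ) (hy : InCns δ y)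
    (hdet : ¬ IsSquare (mat y).det) : ∃ n, orderOf (y ^ n) = 8 := by
  obtain ⟨k, hk⟩ := (Fact.out : ℓ.Prime).odd_of_ne_two hℓ
  obtain ⟨e, he⟩ := Nat.even_mul_succ_self k
  have hn : (ℓ + 1) * (ℓ / 2) = e * 2 ^ 2 := by
    rw [show ℓ / 2 = k by omega, hk]; linear_combination 2 * he
  have h4 := pow_eq_neg_one hℓ hδ hy hdet
  rw [hn] at h4
  refine ⟨e, orderOf_eq_prime_pow (p := 2) (n := 2) ?_ ?_⟩
  · rw [← pow_mul, h4]
    exact neg_one_ne_one hℓ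
  · rw [← pow_mul, pow_succ, ← mul_assoc, pow_mul, h4, neg_one_sq]

lemma mul_inv_mem_cartan (hg : g ∈ cartanNormalizer δ X) (hg' : g ∉ cartan δ X)
    (hh : h ∈ cartanNormalizer δ X) (hh' : h ∉ cartan δ X) : g * h⁻¹ ∈ cartan δ X := by
  rw [mem_cartanNormalizer] at hg hh
  rw [mem_cartan] at hg' hh' ⊢
  have hg := inNnsAnti_iff_cartanForm.mp (hg.resolve_left hg')
  have hh := inNnsAnti_iff_cartanForm.mp (hh.resolve_left hh')
  rw [show X * (g * h⁻¹) * X⁻¹ = X * g * X⁻¹ * (X * h * X⁻¹)⁻¹ by group, inCns_iff_cartanForm]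
  simpa using hg.mul (by ring) (hh.inv (by ring))

lemma card_cartanNormalizer_inf_le (H : Subgroup (GL2 ℓ)) :
    Nat.card (cartanNormalizer δ X ⊓ H : Subgroup (GL2 ℓ)) ≤
      2 * Nat.card (cartan δ X ⊓ H : Subgroup (GL2 ℓ)) := by
  set A := cartan δ X ⊓ H
  set N := cartanNormalizer δ X ⊓ H
  by_cases hNA : (N : Set (GL2 ℓ)) ⊆ A
  · exact (Subgroup.card_le_of_le hNA).trans (by omega)
  obtain ⟨n₁, hn₁, hn₁A⟩ := Set.not_subset.mp hNA
  have hsub : (N : Set (GL2 ℓ)) ⊆ A ∪ (· * n₁) '' A := by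
    intro n hn
    by_cases hnA : n ∈ A
    · exact Or.inl hnA
    rw [SetLike.mem_coe, Subgroup.mem_inf] at hn hn₁
    refine Or.inr ⟨n * n₁⁻¹, Subgroup.mem_inf.mpr ⟨?_, mul_mem hn.2 (inv_mem hn₁.2)⟩, by group⟩
    exact mul_inv_mem_cartan hn.1 (fun h => hnA ⟨h, hn.2⟩) hn₁.1 (fun h => hn₁A ⟨h, hn₁.2⟩)
  rw [← SetLike.coe_sort_coe, ← SetLike.coe_sort_coe, Nat.card_coe_set_eq, Nat.card_coe_set_eq]
  calc (N : Set (GL2 ℓ)).ncard ≤ (A ∪ (· * n₁) '' A : Set (GL2 ℓ)).ncard := Set.ncard_le_ncard hsub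
    _ ≤ (A : Set (GL2 ℓ)).ncard + ((· * n₁) '' A).ncard := Set.ncard_union_le _ _
    _ = 2 * (A : Set (GL2 ℓ)).ncard := by
      rw [Set.ncard_image_of_injective _ (mul_left_injective n₁), two_mul]

variable (δ) in
def cover (H : Subgroup (GL2 ℓ)) (X : GL2 ℓ) : Set (GL2 ℓ) :=
  {y | ∃ g ∈ H, g * y * g⁻¹ ∈ ((cartan δ X ⊓ H : Subgroup (GL2 ℓ)) : Set (GL2 ℓ)) \
    Subgroup.center (GL2 ℓ)}

variable {H : Subgroup (GL2 ℓ)}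

lemma cover_subset :
    cover δ H X ⊆ (H : Set (GL2 ℓ)) \ (Subgroup.center (GL2 ℓ) ⊓ H : Subgroup _) := by
  rintro y ⟨g, hg, ⟨-, hyH⟩, hyZ⟩
  refine ⟨?_, fun hy => hyZ (Subgroup.conj_mem_center_iff.mpr hy.1)⟩
  simpa [mul_assoc] using mul_mem (mul_mem (inv_mem hg) hyH) hg

lemma ncard_cover_mul (hℓ : ℓ ≠ 2) (hδ : δ ≠ 0) (H : Subgroup (GL2 ℓ)) (X : GL2 ℓ) :
    (cover δ H X).ncard * Nat.card (cartanNormalizer δ X ⊓ H : Subgroup (GL2 ℓ)) =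
      Nat.card H * (Nat.card (cartan δ X ⊓ H : Subgroup (GL2 ℓ)) -
        Nat.card (Subgroup.center (GL2 ℓ) ⊓ H : Subgroup (GL2 ℓ))) := by
  rw [cover, ncard_conjCover_mul_card inf_le_right]
  · congr 1
    rw [← SetLike.coe_sort_coe, ← SetLike.coe_sort_coe, Nat.card_coe_set_eq, Nat.card_coe_set_eq,
      ← Set.ncard_sdiff (show ((Subgroup.center (GL2 ℓ) ⊓ H : Subgroup (GL2 ℓ)) : Set (GL2 ℓ)) ⊆
        (cartan δ X ⊓ H : Subgroup (GL2 ℓ)) from inf_le_inf_right H center_le_cartan)]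
    congr 1
    ext z
    simp only [Set.mem_sdiff, SetLike.mem_coe, Subgroup.mem_inf]
    tauto
  · rintro c ⟨hcA, hcZ⟩ g hg
    obtain ⟨hc, hcH⟩ := Subgroup.mem_inf.mp hcA
    simp only [Set.mem_sdiff, SetLike.mem_coe, Subgroup.mem_inf]
    constructor
    · rintro ⟨⟨hgc, -⟩, -⟩
      exact ⟨mem_cartanNormalizer_of_conj_mem hℓ hδ hc hcZ hgc, hg⟩
    · rintro ⟨hgN, -⟩
      exact ⟨⟨conj_mem_cartan hgN hc, mul_mem (mul_mem hg hcH) (inv_mem hg)⟩,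
        fun h => hcZ (Subgroup.conj_mem_center_iff.mp h)⟩

lemma disjoint_cover (hδ : δ ≠ 0) {X₀ X₁ x₁ : GL2 ℓ} (hx₁ : x₁ ∈ cartan δ X₁ ⊓ H)
    (hx₁Z : x₁ ∉ Subgroup.center (GL2 ℓ)) (hx₁cov : x₁ ∉ cover δ H X₀) :
    Disjoint (cover δ H X₀) (cover δ H X₁) := by
  rw [Set.disjoint_left]
  rintro y ⟨g₀, hg₀, hc₀, hc₀Z⟩ ⟨g₁, hg₁, hc₁, -⟩
  obtain ⟨hx₁, hx₁H⟩ := Subgroup.mem_inf.mp hx₁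
  have hc₀ := (Subgroup.mem_inf.mp hc₀).1
  have hc₁ := (Subgroup.mem_inf.mp hc₁).1
  have hk : g₀ * g₁⁻¹ ∈ H := mul_mem hg₀ (inv_mem hg₁)
  -- `x₁` commutes with `g₁ y g₁⁻¹`, so its conjugate by `g₀ g₁⁻¹` commutes with `g₀ y g₀⁻¹`.
  have hcomm : Commute (g₀ * g₁⁻¹ * x₁ * (g₀ * g₁⁻¹)⁻¹) (g₀ * y * g₀⁻¹) := by
    have := (cartan_commute hx₁ hc₁).eq
    calc g₀ * g₁⁻¹ * x₁ * (g₀ * g₁⁻¹)⁻¹ * (g₀ * y * g₀⁻¹)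
        = g₀ * g₁⁻¹ * (x₁ * (g₁ * y * g₁⁻¹)) * (g₀ * g₁⁻¹)⁻¹ := by group
      _ = g₀ * g₁⁻¹ * ((g₁ * y * g₁⁻¹) * x₁) * (g₀ * g₁⁻¹)⁻¹ := by rw [this]
      _ = g₀ * y * g₀⁻¹ * (g₀ * g₁⁻¹ * x₁ * (g₀ * g₁⁻¹)⁻¹) := by group
  refine hx₁cov ⟨g₀ * g₁⁻¹, hk, Subgroup.mem_inf.mpr ⟨?_, ?_⟩, ?_⟩
  · exact mem_cartan_of_commute hδ hc₀ hc₀Z hcomm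
  · exact mul_mem (mul_mem hk hx₁H) (inv_mem hk)
  · exact fun h => hx₁Z (Subgroup.conj_mem_center_iff.mp h)

lemma ncard_diff_center (H : Subgroup (GL2 ℓ)) :
    ((H : Set (GL2 ℓ)) \ (Subgroup.center (GL2 ℓ) ⊓ H : Subgroup (GL2 ℓ))).ncard =
      Nat.card H - Nat.card (Subgroup.center (GL2 ℓ) ⊓ H : Subgroup (GL2 ℓ)) := by
  rw [Set.ncard_sdiff (show ((Subgroup.center (GL2 ℓ) ⊓ H : Subgroup (GL2 ℓ)) : Set (GL2 ℓ)) ⊆ H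
      from inf_le_right), ← Nat.card_coe_set_eq, ← Nat.card_coe_set_eq]
  rfl

lemma le_cartan_of_subset_cover (hℓ : ℓ ≠ 2) (hδ : δ ≠ 0) {X₀ : GL2 ℓ}
    (hN₀ : cartanNormalizer δ X₀ ⊓ H ≤ cartan δ X₀)
    (hcov : ∀ x ∈ H, x ∉ Subgroup.center (GL2 ℓ) → x ∈ cover δ H X₀) : H ≤ cartan δ X₀ := by
  have h₀ := ncard_cover_mul hℓ hδ H X₀
  rw [le_antisymm (le_inf hN₀ inf_le_right) (inf_le_inf_right H cartan_le_cartanNormalizer),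
    cover_subset.antisymm fun x ⟨hxH, hxZ⟩ => hcov x hxH fun h => hxZ ⟨h, hxH⟩,
    ncard_diff_center] at h₀
  have hs : 0 < Nat.card (Subgroup.center (GL2 ℓ) ⊓ H : Subgroup (GL2 ℓ)) := Nat.card_pos
  have hsa := Subgroup.card_le_of_le (inf_le_inf_right H (center_le_cartan (δ := δ) (X := X₀)))
  have han := Subgroup.card_le_of_le (inf_le_right : cartan δ X₀ ⊓ H ≤ H)
  -- `(n - s) a = n (a - s)` forces `a = n`
  have ha : Nat.card H ≤ Nat.card (cartan δ X₀ ⊓ H : Subgroup (GL2 ℓ)) := by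
    zify [hsa, hsa.trans han] at h₀
    have hs' : (0 : ℤ) < Nat.card (Subgroup.center (GL2 ℓ) ⊓ H : Subgroup (GL2 ℓ)) := by
      exact_mod_cast hs
    exact_mod_cast (by nlinarith : (Nat.card H : ℤ) ≤ Nat.card (cartan δ X₀ ⊓ H : Subgroup _))
  exact (Subgroup.eq_of_le_of_card_ge inf_le_right ha).ge.trans inf_le_left

lemma ncard_cover_add_ncard_cover_le (hδ : δ ≠ 0) {X₀ X₁ x₁ : GL2 ℓ} (hx₁ : x₁ ∈ cartan δ X₁ ⊓ H)
    (hx₁Z : x₁ ∉ Subgroup.center (GL2 ℓ)) (hx₁cov : x₁ ∉ cover δ H X₀) :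
    (cover δ H X₀).ncard + (cover δ H X₁).ncard +
      Nat.card (Subgroup.center (GL2 ℓ) ⊓ H : Subgroup (GL2 ℓ)) ≤ Nat.card H := by
  have := Set.ncard_le_ncard (Set.union_subset (cover_subset (δ := δ) (H := H) (X := X₀))
    (cover_subset (δ := δ) (X := X₁)))
  rw [Set.ncard_union_eq (disjoint_cover hδ hx₁ hx₁Z hx₁cov), ncard_diff_center] at this
  have := Subgroup.card_le_of_le (inf_le_right : Subgroup.center (GL2 ℓ) ⊓ H ≤ H)
  omega

/-- `hbound` says the tori of `H` are too large for a second `H`-conjugacy class of tori to fit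
next to that of `cartan δ X₀`. -/
theorem le_cartan_of_card_bound (hℓ : ℓ ≠ 2) (hδ : δ ≠ 0) (hH : ∀ x ∈ H, ∃ X, x ∈ cartan δ X)
    {X₀ : GL2 ℓ} (hN₀ : cartanNormalizer δ X₀ ⊓ H ≤ cartan δ X₀)
    (hbound : ∀ X₁, ∀ x₁ ∈ cartan δ X₁ ⊓ H, x₁ ∉ Subgroup.center (GL2 ℓ) →
      Nat.card (Subgroup.center (GL2 ℓ) ⊓ H : Subgroup (GL2 ℓ)) *
          (Nat.card (cartan δ X₀ ⊓ H : Subgroup (GL2 ℓ)) +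
            2 * Nat.card (cartan δ X₁ ⊓ H : Subgroup (GL2 ℓ))) ≤
        Nat.card (cartan δ X₀ ⊓ H : Subgroup (GL2 ℓ)) *
          Nat.card (cartan δ X₁ ⊓ H : Subgroup (GL2 ℓ))) :
    H ≤ cartan δ X₀ := by
  refine le_cartan_of_subset_cover hℓ hδ hN₀ fun x₁ hx₁H hx₁Z => ?_
  by_contra hx₁cov
  obtain ⟨X₁, hx₁⟩ := hH x₁ hx₁H
  have hsa (X : GL2 ℓ) :=
    Subgroup.card_le_of_le (inf_le_inf_right H (center_le_cartan (δ := δ) (X := X)))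
  have h₀ := ncard_cover_mul hℓ hδ H X₀
  rw [le_antisymm (le_inf hN₀ inf_le_right) (inf_le_inf_right H cartan_le_cartanNormalizer)] at h₀
  exact (hbound X₁ x₁ ⟨hx₁, hx₁H⟩ hx₁Z).not_gt <| mul_lt_of_cover_counts Nat.card_pos (hsa X₀)
    (hsa X₁) (card_cartanNormalizer_inf_le H) h₀ (ncard_cover_mul hℓ hδ H X₁)
    (ncard_cover_add_ncard_cover_le hδ ⟨hx₁, hx₁H⟩ hx₁Z hx₁cov)

lemma cartanNormalizer_inf_le_cartan (hℓ : ℓ ≠ 2) (hδ : ¬ IsSquare δ) {G : Subgroup (GL2 ℓ)}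
    (hloc : ∀ g ∈ G, ∃ X, g ∈ cartan δ X) {X₀ g₁ : GL2 ℓ} (hg₁ : g₁ ∈ cartan δ X₀ ⊓ G)
    (hdet : ¬ IsSquare (mat g₁).det) : cartanNormalizer δ X₀ ⊓ G ≤ cartan δ X₀ := by
  rintro h ⟨hN, hG⟩
  by_contra hC
  have hg₁N := cartan_le_cartanNormalizer (Subgroup.mem_inf.mp hg₁).1
  have hC' : g₁ * h ∉ cartan δ X₀ := fun h' => hC (by
    simpa using mul_mem (inv_mem (Subgroup.mem_inf.mp hg₁).1) h')
  have hneg (g : GL2 ℓ) (hg : g ∈ G) (hgN : g ∈ cartanNormalizer δ X₀) (hgC : g ∉ cartan δ X₀) :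
      ¬ IsSquare (-(mat g).det) := by
    obtain ⟨X, hX⟩ := hloc g hg
    exact not_isSquare_neg_det_of_trace_eq_zero hℓ hδ hX
      (trace_eq_zero_of_mem_cartanNormalizer hgN hgC)
  -- `-det (g₁ h) = det g₁ * (-det h)` is a product of two non-squares
  apply hneg _ (mul_mem (Subgroup.mem_inf.mp hg₁).2 hG) (mul_mem hg₁N hN) hC'
  rw [mat_mul, Matrix.det_mul, ← mul_neg, FiniteField.isSquare_mul_iff (det_mat_ne_zero g₁)
    (neg_ne_zero.mpr (det_mat_ne_zero h))]
  exact iff_of_false hdet (hneg h hG hN hC)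

lemma exists_le_cartan_of_mod_four_eq_three (hℓ : ℓ % 4 = 3) (hδ : ¬ IsSquare δ)
    {G : Subgroup (GL2 ℓ)} (hloc : ∀ g ∈ G, ∃ X, g ∈ cartan δ X) {g₁ : GL2 ℓ} (hg₁ : g₁ ∈ G)
    (hdet : ¬ IsSquare (mat g₁).det) : ∃ X, G ≤ cartan δ X := by
  have hℓ2 : ℓ ≠ 2 := by omega
  have hδ0 : δ ≠ 0 := fun h => hδ (h ▸ IsSquare.zero)
  obtain ⟨X₀, hX₀⟩ := hloc g₁ hg₁
  have hg₁' : g₁ ∈ cartan δ X₀ ⊓ G := ⟨hX₀, hg₁⟩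
  refine ⟨X₀, le_cartan_of_card_bound hℓ2 hδ0 hloc
    (cartanNormalizer_inf_le_cartan hℓ2 hδ hloc hg₁' hdet) fun X₁ x₁ hx₁ hx₁Z => ?_⟩
  have hZA (X : GL2 ℓ) : Subgroup.center (GL2 ℓ) ⊓ G ≤ cartan δ X ⊓ G :=
    inf_le_inf_right G center_le_cartan
  -- `g₁` has a power of order `8` in `cartan δ X₀ ⊓ G`, while the scalars of `G` have order
  -- dividing `ℓ - 1 ≡ 2 (mod 4)`.
  have h₀ : 4 * Nat.card (Subgroup.center (GL2 ℓ) ⊓ G : Subgroup (GL2 ℓ)) ≤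
      Nat.card (cartan δ X₀ ⊓ G : Subgroup (GL2 ℓ)) := by
    obtain ⟨n, hn⟩ := exists_orderOf_pow_eq_eight hℓ2 hδ (mem_cartan.mp hX₀) (by rwa [det_conj])
    rw [conj_pow, ← MulAut.conj_apply, MulEquiv.orderOf_eq] at hn
    refine Nat.four_mul_le_of_dvd Nat.card_pos
      (hn ▸ Subgroup.orderOf_dvd_natCard _ (pow_mem hg₁' n))
      (Subgroup.card_dvd_of_le (hZA X₀)) ?_ (m := ℓ - 1) (by omega)
    exact card_center (ℓ := ℓ) ▸ Subgroup.card_dvd_of_le inf_le_left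
  have h₁ := Subgroup.mul_card_le_card_of_le_relIndex (hZA X₁)
    (Subgroup.two_le_relIndex (hZA X₁) hx₁ fun h => hx₁Z (Subgroup.mem_inf.mp h).1)
  nlinarith

variable (G : Subgroup (GL2 ℓ)) in
def squareDet : Subgroup (GL2 ℓ) where
  carrier := {g | g ∈ G ∧ IsSquare (mat g).det}
  mul_mem' {a b} ha hb := ⟨mul_mem ha.1 hb.1, by rw [mat_mul, Matrix.det_mul]; exact ha.2.mul hb.2⟩
  one_mem' := ⟨one_mem G, by simp [mat]⟩
  inv_mem' {a} ha := ⟨inv_mem ha.1, by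
    rw [mat_inv, Matrix.det_nonsing_inv, Ring.inverse_eq_inv']; exact ha.2.inv⟩

lemma trace_ne_zero_of_mem_squareDet (hℓ : ℓ % 4 = 1) (hδ : ¬ IsSquare δ) {G : Subgroup (GL2 ℓ)}
    (hloc : ∀ g ∈ G, ∃ X, g ∈ cartan δ X) {h : GL2 ℓ} (hh : h ∈ squareDet G) :
    (mat h).trace ≠ 0 := by
  intro htr
  obtain ⟨X, hX⟩ := hloc h hh.1
  apply not_isSquare_neg_det_of_trace_eq_zero (by omega) hδ hX htr
  rw [neg_eq_neg_one_mul]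
  exact (ZMod.exists_sq_eq_neg_one_iff.mpr (by omega)).mul hh.2

lemma three_mul_card_le (hℓ : ℓ % 4 = 1) (hδ : ¬ IsSquare δ) {G : Subgroup (GL2 ℓ)}
    (hloc : ∀ g ∈ G, ∃ X, g ∈ cartan δ X) {X x : GL2 ℓ} (hx : x ∈ cartan δ X ⊓ squareDet G)
    (hxZ : x ∉ Subgroup.center (GL2 ℓ)) :
    3 * Nat.card (Subgroup.center (GL2 ℓ) ⊓ squareDet G : Subgroup (GL2 ℓ)) ≤
      Nat.card (cartan δ X ⊓ squareDet G : Subgroup (GL2 ℓ)) := by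
  have hZA := inf_le_inf_right (squareDet G) (center_le_cartan (δ := δ) (X := X))
  have hxZ' : x ∉ Subgroup.center (GL2 ℓ) ⊓ squareDet G := fun h => hxZ (Subgroup.mem_inf.mp h).1
  refine Subgroup.mul_card_le_card_of_le_relIndex hZA ?_
  have h2 := Subgroup.two_le_relIndex hZA hx hxZ'
  -- index `2` would make `x * x` scalar, forcing `trace x = 0`
  refine lt_of_le_of_ne h2 fun h => ?_
  have hsq := Subgroup.sq_mem_of_index_two h.symm ⟨x, hx⟩
  rw [Subgroup.mem_subgroupOf, Subgroup.coe_pow, sq] at hsq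
  exact trace_ne_zero_of_mem_squareDet hℓ hδ hloc (Subgroup.mem_inf.mp hx).2
    (trace_eq_zero_of_mul_self_mem_center hxZ (Subgroup.mem_inf.mp hsq).1)

lemma exists_le_cartanNormalizer_of_mod_four_eq_one (hℓ : ℓ % 4 = 1) (hδ : ¬ IsSquare δ)
    {G : Subgroup (GL2 ℓ)} (hloc : ∀ g ∈ G, ∃ X, g ∈ cartan δ X) {g₁ : GL2 ℓ} (hg₁ : g₁ ∈ G)
    (hdet : ¬ IsSquare (mat g₁).det) : ∃ X, G ≤ cartanNormalizer δ X := by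
  have hℓ2 : ℓ ≠ 2 := by omega
  have hδ0 : δ ≠ 0 := fun h => hδ (h ▸ IsSquare.zero)
  by_cases hZ : squareDet G ≤ Subgroup.center (GL2 ℓ)
  · -- `G` lies in `g₁ Z ∪ Z`, inside the torus of `g₁`
    obtain ⟨X, hX⟩ := hloc g₁ hg₁
    refine ⟨X, fun g hg => cartan_le_cartanNormalizer ?_⟩
    by_cases hsq : IsSquare (mat g).det
    · exact center_le_cartan (hZ ⟨hg, hsq⟩)
    have hg' : g₁⁻¹ * g ∈ squareDet G := by
      refine ⟨mul_mem (inv_mem hg₁) hg, ?_⟩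
      rw [mat_mul, Matrix.det_mul, mat_inv, Matrix.det_nonsing_inv, Ring.inverse_eq_inv',
        FiniteField.isSquare_mul_iff (inv_ne_zero (det_mat_ne_zero g₁)) (det_mat_ne_zero g),
        isSquare_inv]
      exact iff_of_false hdet hsq
    simpa using mul_mem hX (center_le_cartan (hZ hg'))
  obtain ⟨x₀, hx₀, hx₀Z⟩ := Set.not_subset.mp hZ
  obtain ⟨X₀, hX₀⟩ := hloc x₀ hx₀.1
  have hle : squareDet G ≤ cartan δ X₀ := by
    refine le_cartan_of_card_bound (H := squareDet G) hℓ2 hδ0 (fun x hx => hloc x hx.1) ?_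
      fun X₁ x₁ hx₁ hx₁Z => ?_
    · rintro h ⟨hN, hH⟩
      by_contra hC
      exact trace_ne_zero_of_mem_squareDet hℓ hδ hloc hH
        (trace_eq_zero_of_mem_cartanNormalizer hN hC)
    · have h₀ := three_mul_card_le hℓ hδ hloc ⟨hX₀, hx₀⟩ hx₀Z
      have h₁ := three_mul_card_le hℓ hδ hloc hx₁ hx₁Z
      nlinarith
  -- `squareDet G` is normal in `G`, so `G` normalizes the torus of `x₀`
  refine ⟨X₀, fun g hg => mem_cartanNormalizer_of_conj_mem hℓ2 hδ0 hX₀ hx₀Z (hle ⟨?_, ?_⟩)⟩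
  · exact mul_mem (mul_mem hg hx₀.1) (inv_mem hg)
  · rw [det_conj]
    exact hx₀.2

end NonsplitCartan

/-- If every element of `G ≤ GL₂(F_ℓ)` lies in a conjugate of the nonsplit
Cartan and the determinant map `G → F_ℓˣ` is surjective, then `G` is contained in a
conjugate of `C_ns`, or `G` is contained in a conjugate of `N_ns` and `ℓ ≡ 1 (mod 4)`. -/
theorem local_global_nonsplit_cartan_surjective_det
    {ℓ : ℕ} [Fact ℓ.Prime] (hℓ : ℓ ≠ 2) (δ : ZMod ℓ) (hδ : ¬ IsSquare δ)
    (G : Subgroup (GL2 ℓ))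
    (hloc : ∀ g ∈ G, ∃ x : GL2 ℓ, InCns δ (x * g * x⁻¹))
    (hdet : ∀ u : (ZMod ℓ)ˣ, ∃ g ∈ G, Matrix.GeneralLinearGroup.det g = u) :
    (∃ x : GL2 ℓ, ∀ g ∈ G, InCns δ (x * g * x⁻¹)) ∨
    ((∃ x : GL2 ℓ, ∀ g ∈ G, InNns δ (x * g * x⁻¹)) ∧ ℓ % 4 = 1) := by
  obtain ⟨u, hu⟩ :=
    FiniteField.exists_nonsquare (by rwa [ZMod.ringChar_zmod_n] : ringChar (ZMod ℓ) ≠ 2)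
  obtain ⟨g₁, hg₁, hg₁u⟩ := hdet (Units.mk0 u fun h => hu (h ▸ IsSquare.zero))
  have hg₁det : ¬ IsSquare (mat g₁).det := by
    rwa [mat, ← Matrix.GeneralLinearGroup.val_det_apply, hg₁u, Units.val_mk0]
  rcases Nat.odd_mod_four_iff.mp (Nat.odd_iff.mp ((Fact.out : ℓ.Prime).odd_of_ne_two hℓ))
    with h1 | h3
  · obtain ⟨X, hX⟩ :=
      NonsplitCartan.exists_le_cartanNormalizer_of_mod_four_eq_one h1 hδ hloc hg₁ hg₁det
    exact Or.inr ⟨⟨X, fun g hg => hX hg⟩, h1⟩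
  · obtain ⟨X, hX⟩ :=
      NonsplitCartan.exists_le_cartan_of_mod_four_eq_three h3 hδ hloc hg₁ hg₁det
    exact Or.inl ⟨X, fun g hg => hX hg⟩
end

section
/- Let ℓ be an odd prime and let g = diag(a, b) be an invertible diagonal matrix in GL₂(F_ℓ). Then g lies in a conjugate of N_ns (the normalizer of the nonsplit Cartan) if and only if a = b or a = −b. -/
open Matrix

/-!
Conjugation preserves the trace and the discriminant `tr² - 4 det`. For `diag(a, b)` the
discriminant is `(a - b)²`, while for `[[p, δq], [q, p]] ∈ C_ns` it is `δ (2q)²`; as `δ` is not a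
square, equality forces `a = b`. Elements of `N_ns \ C_ns` have trace `0`, forcing `a + b = 0`.
Conversely `diag(a, a) ∈ C_ns` and `diag(a, -a) ∈ N_ns \ C_ns`.
-/

theorem Matrix.trace_sq_sub_four_mul_det_fin_two {R : Type*} [CommRing R]
    (M : Matrix (Fin 2) (Fin 2) R) :
    M.trace ^ 2 - 4 * M.det = (M 0 0 - M 1 1) ^ 2 + 4 * (M 0 1 * M 1 0) := by
  rw [trace_fin_two, det_fin_two]
  ring

theorem eq_zero_of_sq_eq_mul_sq {K : Type*} [Field K] {δ x y : K} (hδ : ¬IsSquare δ)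
    (h : x ^ 2 = δ * y ^ 2) : x = 0 := by
  by_cases hy : y = 0
  · simpa [hy] using h
  · refine absurd ⟨x / y, ?_⟩ hδ
    field_simp
    linear_combination -h

section GL2

variable {ℓ : ℕ}

theorem trace_mat_conj (x g : GL2 ℓ) : (mat (x * g * x⁻¹)).trace = (mat g).trace :=
  trace_units_conj x (mat g)

theorem det_mat_conj (x g : GL2 ℓ) : (mat (x * g * x⁻¹)).det = (mat g).det :=
  det_units_conj x (mat g)

theorem InCns.trace_sq_sub_four_mul_det {δ : ZMod ℓ} {h : GL2 ℓ} (hh : InCns δ h) :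
    (mat h).trace ^ 2 - 4 * (mat h).det = δ * (2 * mat h 1 0) ^ 2 := by
  rw [trace_sq_sub_four_mul_det_fin_two, hh.1, hh.2]
  ring

theorem InNnsAnti.trace_eq_zero {δ : ZMod ℓ} {h : GL2 ℓ} (hh : InNnsAnti δ h) :
    (mat h).trace = 0 := by
  rw [trace_fin_two, hh.1, add_neg_cancel]

end GL2

theorem diag_mem_conj_Nns_iff_general
    {ℓ : ℕ} [Fact ℓ.Prime] (δ : ZMod ℓ) (hδ : ¬ IsSquare δ)
    (g : GL2 ℓ) (a b : ZMod ℓ) (hg : mat g = !![a, 0; 0, b]) :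
    (∃ x : GL2 ℓ, InNns δ (x * g * x⁻¹)) ↔ (a = b ∨ a = -b) := by
  constructor
  · rintro ⟨x, hcns | hanti⟩
    · have hdisc : (a - b) ^ 2 = δ * (2 * mat (x * g * x⁻¹) 1 0) ^ 2 := by
        rw [← hcns.trace_sq_sub_four_mul_det, trace_mat_conj, det_mat_conj,
          trace_sq_sub_four_mul_det_fin_two, hg]
        simp
      exact Or.inl (sub_eq_zero.mp (eq_zero_of_sq_eq_mul_sq hδ hdisc))
    · have htr := hanti.trace_eq_zero
      rw [trace_mat_conj, hg, trace_fin_two] at htr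
      exact Or.inr (eq_neg_of_add_eq_zero_left (by simpa using htr))
  · refine fun hab => ⟨1, ?_⟩
    rw [one_mul, inv_one, mul_one]
    rcases hab with rfl | rfl
    · exact Or.inl ⟨by simp [hg], by simp [hg]⟩
    · exact Or.inr ⟨by simp [hg], by simp [hg]⟩

/-- An invertible diagonal matrix `diag(a, b)` lies in a conjugate of
`N_ns` if and only if `a = b` or `a = -b`. -/
theorem diag_mem_conj_Nns_iff
    {ℓ : ℕ} [Fact ℓ.Prime] (hℓ : ℓ ≠ 2) (δ : ZMod ℓ) (hδ : ¬ IsSquare δ)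
    (g : GL2 ℓ) (a b : ZMod ℓ) (hg : mat g = !![a, 0; 0, b]) :
    (∃ x : GL2 ℓ, InNns δ (x * g * x⁻¹)) ↔ (a = b ∨ a = -b) :=
  diag_mem_conj_Nns_iff_general δ hδ g a b hg
end

section
/- Let ℓ be an odd prime. Every element g ∈ N_ns \ C_ns (i.e. an invertible matrix of the form [[a, −δb],[b, −a]]) lies in a conjugate of N_sp, the normalizer of the split Cartan subgroup. -/
open Matrix

/-!
If `g = [[a, -δb], [b, -a]]` has `b = 0` it is already diagonal. Otherwise `e₁` is not an
eigenvector of `g`, so `e₁, g e₁` is a basis, and by Cayley–Hamilton `g` acts on it by the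
companion matrix `[[0, -det g], [1, tr g]]`. Since `tr g = 0`, that matrix is antidiagonal.
-/

namespace Matrix

variable {R : Type*} [CommRing R]

def cyclicBasis (A : Matrix (Fin 2) (Fin 2) R) : Matrix (Fin 2) (Fin 2) R :=
  !![1, A 0 0; 0, A 1 0]

theorem det_cyclicBasis (A : Matrix (Fin 2) (Fin 2) R) : (cyclicBasis A).det = A 1 0 := by
  simp [cyclicBasis, det_fin_two_of]

theorem mul_cyclicBasis (A : Matrix (Fin 2) (Fin 2) R) :
    A * cyclicBasis A = cyclicBasis A * !![0, -A.det; 1, A.trace] := by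
  rw [eta_fin_two A]
  ext i j
  fin_cases i <;> fin_cases j <;>
    simp [cyclicBasis, det_fin_two_of, trace_fin_two_of, mul_apply, Fin.sum_univ_two] <;> ring

end Matrix

namespace Matrix.GeneralLinearGroup

variable {K : Type*} [Field K]

theorem exists_conj_eq_companion (g : GL (Fin 2) K)
    (hg : (g : Matrix (Fin 2) (Fin 2) K) 1 0 ≠ 0) :
    ∃ x : GL (Fin 2) K, ((x * g * x⁻¹ : GL (Fin 2) K) : Matrix (Fin 2) (Fin 2) K) =
      !![0, -(g : Matrix (Fin 2) (Fin 2) K).det; 1, (g : Matrix (Fin 2) (Fin 2) K).trace] := by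
  set P := mkOfDetNeZero (cyclicBasis (g : Matrix (Fin 2) (Fin 2) K))
    (by rwa [det_cyclicBasis])
  have hP : (P : Matrix (Fin 2) (Fin 2) K) = cyclicBasis (g : Matrix (Fin 2) (Fin 2) K) := rfl
  refine ⟨P⁻¹, ?_⟩
  rw [inv_inv, coe_mul, coe_mul, mul_assoc, hP, mul_cyclicBasis, ← mul_assoc, ← hP,
    ← coe_mul, inv_mul_cancel, coe_one, one_mul]

end Matrix.GeneralLinearGroup

theorem NnsAnti_mem_conj_Nsp_general
    {ℓ : ℕ} [Fact ℓ.Prime] (δ : ZMod ℓ)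
    (g : GL2 ℓ) (hg : InNnsAnti δ g) :
    ∃ x : GL2 ℓ, InNsp (x * g * x⁻¹) := by
  obtain ⟨h11, h01⟩ := hg
  by_cases hb : mat g 1 0 = 0
  · exact ⟨1, Or.inl ⟨by simp [h01, hb], by simpa using hb⟩⟩
  have htrace : (mat g).trace = 0 := by rw [trace_fin_two, h11, add_neg_cancel]
  obtain ⟨x, hx⟩ := GeneralLinearGroup.exists_conj_eq_companion g hb
  exact ⟨x, Or.inr ⟨by simp [mat, hx], by simpa [mat, hx] using htrace⟩⟩

/-- Every element of `N_ns \ C_ns` (matrices `[[a, -δb],[b, -a]]`) lies in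
a conjugate of `N_sp`. -/
theorem NnsAnti_mem_conj_Nsp
    {ℓ : ℕ} [Fact ℓ.Prime] (hℓ : ℓ ≠ 2) (δ : ZMod ℓ) (hδ : ¬ IsSquare δ)
    (g : GL2 ℓ) (hg : InNnsAnti δ g) :
    ∃ x : GL2 ℓ, InNsp (x * g * x⁻¹) :=
  NnsAnti_mem_conj_Nsp_general δ g hg
end
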